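/- (Preservation of symmetric convex order under polar transforms) Let W and V be B-DMCs with finite output alphabets such that for every convex symmetric function f : [-1,1] → ℝ, Σ_y q_V(y) f(Δ_V(y)) ≤ Σ_y q_W(y) f(Δ_W(y)). Then the same inequality holds for the pairs (V⁻, W⁻) and (V⁺, W⁺). -/

import Mathlib

/-!
Write `s = Δ(y₁)` and `t = Δ(y₂)`. The minus channel has `q⁻ = q(y₁) q(y₂)` and `Δ⁻ = s t`; the two
plus-channel outputs with `u₁ = 0, 1` together contribute `q(y₁) q(y₂) g(s, t)`, where
`g(s, t) = ((1 + s t) f((t + s) / (1 + s t)) + (1 - s t) f((t - s) / (1 - s t))) / 2`.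
In both cases the kernel is symmetric in `(s, t)` and, for fixed `t`, even and convex in `s` (for
the plus kernel because perspectives of convex functions are convex). So the hypothesis, applied to
`g(·, t)`, replaces `V` by `W` in the first coordinate and then, by symmetry, in the second.
-/

open Set Finset

/-- Normalized difference of transition probabilities (Δ-parameter);
by Lean's convention, division by zero yields 0. -/
noncomputable def delta {𝒴 : Type*} (W : Bool → 𝒴 → ℝ) (y : 𝒴) : ℝ :=
  (W false y - W true y) / (W false y + W true y)

/-- Output distribution under uniform input. -/
noncomputable def qCh {𝒴 : Type*} (W : Bool → 𝒴 → ℝ) (y : 𝒴) : ℝ :=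
  (W false y + W true y) / 2

/-- Arıkan's minus polar transform. -/
noncomputable def polarMinus {𝒴 : Type*} [Fintype 𝒴] (W : Bool → 𝒴 → ℝ) :
    Bool → 𝒴 × 𝒴 → ℝ :=
  fun u₁ p => ∑ u₂ : Bool, (1 / 2 : ℝ) * W (xor u₁ u₂) p.1 * W u₂ p.2

/-- Arıkan's plus polar transform. -/
noncomputable def polarPlus {𝒴 : Type*} (W : Bool → 𝒴 → ℝ) :
    Bool → 𝒴 × 𝒴 × Bool → ℝ :=
  fun u₂ p => (1 / 2 : ℝ) * W (xor p.2.2 u₂) p.1 * W u₂ p.2.1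

lemma div_mem_Icc_of_abs_le {x y : ℝ} (h : |x| ≤ y) : x / y ∈ Icc (-1 : ℝ) 1 := by
  rcases (abs_nonneg x |>.trans h).eq_or_lt with rfl | hy
  · simp
  · rw [Set.mem_Icc, ← abs_le, abs_div, abs_of_pos hy]
    exact div_le_one_of_le₀ h hy.le

lemma mul_div_cancel_of_abs_le {x y : ℝ} (h : |x| ≤ y) : y * (x / y) = x := by
  rcases (abs_nonneg x |>.trans h).eq_or_lt with rfl | hy
  · simp_all
  · exact mul_div_cancel₀ x hy.ne'

lemma neg_mem_Icc_neg_one_one {s : ℝ} (hs : s ∈ Icc (-1 : ℝ) 1) : -s ∈ Icc (-1 : ℝ) 1 :=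
  ⟨neg_le_neg hs.2, by linarith [hs.1]⟩

lemma mul_mem_Icc_neg_one_one {s t : ℝ} (hs : s ∈ Icc (-1 : ℝ) 1) (ht : t ∈ Icc (-1 : ℝ) 1) :
    s * t ∈ Icc (-1 : ℝ) 1 := by
  rw [Set.mem_Icc, ← abs_le] at *
  rw [abs_mul]
  exact mul_le_one₀ hs (abs_nonneg t) ht

lemma abs_add_le_one_add_mul {s t : ℝ} (hs : s ∈ Icc (-1 : ℝ) 1) (ht : t ∈ Icc (-1 : ℝ) 1) :
    |t + s| ≤ 1 + s * t := by
  obtain ⟨hs₁, hs₂⟩ := hs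
  obtain ⟨ht₁, ht₂⟩ := ht
  rw [abs_le]
  constructor <;> nlinarith [mul_nonneg (sub_nonneg.2 hs₂) (sub_nonneg.2 ht₂),
    mul_nonneg (neg_le_iff_add_nonneg.1 hs₁) (neg_le_iff_add_nonneg.1 ht₁)]

lemma ConvexOn.comp_add_smul {E : Type*} [AddCommGroup E] [Module ℝ E] {C : Set E} {h : E → ℝ}
    (hh : ConvexOn ℝ C h) {S : Set ℝ} (hS : Convex ℝ S) (p v : E)
    (hmaps : ∀ s ∈ S, p + s • v ∈ C) : ConvexOn ℝ S (fun s => h (p + s • v)) := by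
  have := (hh.comp_affineMap (AffineMap.lineMap p (p + v))).subset
    (fun s hs => by simpa [AffineMap.lineMap_apply, add_comm] using hmaps s hs) hS
  refine this.congr fun s _ => ?_
  simp [AffineMap.lineMap_apply, add_comm]

-- At `y = 0` this is `0` (as `x / 0 = 0`), the right boundary value on the cone `|x| ≤ y`.
noncomputable def persp (f : ℝ → ℝ) (p : ℝ × ℝ) : ℝ := p.2 * f (p.1 / p.2)

lemma persp_smul (f : ℝ → ℝ) {μ : ℝ} (hμ : 0 ≤ μ) (p : ℝ × ℝ) :
    persp f (μ • p) = μ * persp f p := by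
  rcases hμ.eq_or_lt with rfl | hμ
  · simp [persp]
  · simp only [persp, Prod.smul_fst, Prod.smul_snd, smul_eq_mul, mul_div_mul_left _ _ hμ.ne']
    ring

lemma persp_neg_fst {f : ℝ → ℝ} (hf : ∀ x ∈ Icc (-1 : ℝ) 1, f x = f (-x)) {x y : ℝ}
    (h : |x| ≤ y) : persp f (-x, y) = persp f (x, y) := by
  simp only [persp, neg_div, ← hf _ (div_mem_Icc_of_abs_le h)]

lemma convex_abs_fst_le_snd : Convex ℝ {p : ℝ × ℝ | |p.1| ≤ p.2} := by
  intro p hp q hq a b ha hb _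
  calc |a * p.1 + b * q.1| ≤ a * |p.1| + b * |q.1| := by
        simpa [abs_of_nonneg ha, abs_of_nonneg hb] using abs_add_le (a * p.1) (b * q.1)
    _ ≤ a * p.2 + b * q.2 := by gcongr <;> assumption

lemma convexOn_persp {f : ℝ → ℝ} (hf : ConvexOn ℝ (Icc (-1 : ℝ) 1) f) :
    ConvexOn ℝ {p : ℝ × ℝ | |p.1| ≤ p.2} (persp f) := by
  refine ⟨convex_abs_fst_le_snd, ?_⟩
  rintro ⟨x₁, y₁⟩ (h₁ : |x₁| ≤ y₁) ⟨x₂, y₂⟩ (h₂ : |x₂| ≤ y₂) a b ha hb hab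
  have hy₁ : 0 ≤ y₁ := (abs_nonneg _).trans h₁
  have hy₂ : 0 ≤ y₂ := (abs_nonneg _).trans h₂
  simp only [Prod.smul_mk, Prod.mk_add_mk, smul_eq_mul]
  set y := a * y₁ + b * y₂
  rcases (by positivity : 0 ≤ y).eq_or_lt with hy | hy
  · have hay : a * y₁ = 0 := by nlinarith [mul_nonneg ha hy₁, mul_nonneg hb hy₂]
    have hby : b * y₂ = 0 := by nlinarith [mul_nonneg ha hy₁, mul_nonneg hb hy₂]
    simp only [persp, ← hy, ← mul_assoc, hay, hby]
    simp
  -- convexity of `f` at the points `xᵢ / yᵢ` with the weights `a yᵢ / y`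
  have key := hf.2 (div_mem_Icc_of_abs_le h₁) (div_mem_Icc_of_abs_le h₂)
    (by positivity : 0 ≤ a * y₁ / y) (by positivity : 0 ≤ b * y₂ / y)
    (by rw [← add_div, div_self hy.ne'])
  have harg : (a * y₁ / y) • (x₁ / y₁) + (b * y₂ / y) • (x₂ / y₂) = (a * x₁ + b * x₂) / y := by
    simp only [smul_eq_mul, div_mul_eq_mul_div, mul_assoc, mul_div_cancel_of_abs_le h₁,
      mul_div_cancel_of_abs_le h₂, add_div]
  rw [harg] at key
  simp only [persp]
  calc y * f ((a * x₁ + b * x₂) / y)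
      ≤ y * ((a * y₁ / y) • f (x₁ / y₁) + (b * y₂ / y) • f (x₂ / y₂)) := by gcongr
    _ = a * (y₁ * f (x₁ / y₁)) + b * (y₂ * f (x₂ / y₂)) := by
        simp only [smul_eq_mul]; field_simp

noncomputable def plusKernel (f : ℝ → ℝ) (s t : ℝ) : ℝ :=
  (persp f (t + s, 1 + s * t) + persp f (t - s, 1 - s * t)) / 2

lemma plusKernel_neg_left (f : ℝ → ℝ) (s t : ℝ) : plusKernel f (-s) t = plusKernel f s t := by
  rw [plusKernel, plusKernel, add_comm (persp f _)]
  simp only [neg_mul, sub_neg_eq_add, ← sub_eq_add_neg]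

lemma plusKernel_comm {f : ℝ → ℝ} (hf : ∀ x ∈ Icc (-1 : ℝ) 1, f x = f (-x)) {s t : ℝ}
    (hs : s ∈ Icc (-1 : ℝ) 1) (ht : t ∈ Icc (-1 : ℝ) 1) : plusKernel f s t = plusKernel f t s := by
  have hst : |t + -s| ≤ 1 + -s * t := abs_add_le_one_add_mul (neg_mem_Icc_neg_one_one hs) ht
  rw [← sub_eq_add_neg, neg_mul, ← sub_eq_add_neg] at hst
  rw [plusKernel, plusKernel, ← persp_neg_fst hf hst, neg_sub, add_comm t s, mul_comm t s]

lemma convexOn_plusKernel {f : ℝ → ℝ} (hf : ConvexOn ℝ (Icc (-1 : ℝ) 1) f) {t : ℝ}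
    (ht : t ∈ Icc (-1 : ℝ) 1) : ConvexOn ℝ (Icc (-1 : ℝ) 1) (fun s => plusKernel f s t) := by
  have h₁ := (convexOn_persp hf).comp_add_smul (convex_Icc _ _) (t, 1) (1, t)
    fun s hs => by simpa using abs_add_le_one_add_mul hs ht
  have h₂ := (convexOn_persp hf).comp_add_smul (convex_Icc _ _) (t, 1) (-1, -t)
    fun s hs => by simpa [← sub_eq_add_neg, mul_comm] using
      abs_add_le_one_add_mul (neg_mem_Icc_neg_one_one hs) ht
  refine ((h₁.add h₂).smul (by norm_num : (0 : ℝ) ≤ 1 / 2)).congr fun s _ => ?_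
  simp [plusKernel, ← sub_eq_add_neg]
  ring

lemma sum_sum_mul_le_sum_sum_mul {α ι κ : Type*} [Fintype ι] [Fintype κ] {S : Set α}
    {p : ι → ℝ} {x : ι → α} {r : κ → ℝ} {z : κ → α} {g : α → α → ℝ}
    (hp : ∀ i, 0 ≤ p i) (hr : ∀ j, 0 ≤ r j) (hx : ∀ i, x i ∈ S) (hz : ∀ j, z j ∈ S)
    (hg : ∀ s ∈ S, ∀ t ∈ S, g s t = g t s)
    (hle : ∀ t ∈ S, ∑ i, p i * g (x i) t ≤ ∑ j, r j * g (z j) t) :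
    ∑ i, ∑ i', p i * p i' * g (x i) (x i') ≤ ∑ j, ∑ j', r j * r j' * g (z j) (z j') := by
  calc ∑ i, ∑ i', p i * p i' * g (x i) (x i')
      = ∑ i', p i' * ∑ i, p i * g (x i) (x i') := by
        rw [Finset.sum_comm]; simp only [Finset.mul_sum]
        exact Finset.sum_congr rfl fun _ _ => Finset.sum_congr rfl fun _ _ => by ring
    _ ≤ ∑ i', p i' * ∑ j, r j * g (z j) (x i') := by
        gcongr with i' _
        · exact hp i'
        · exact hle _ (hx i')
    _ = ∑ j, r j * ∑ i', p i' * g (x i') (z j) := by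
        simp only [Finset.mul_sum]
        rw [Finset.sum_comm]
        refine Finset.sum_congr rfl fun j _ => Finset.sum_congr rfl fun i' _ => ?_
        rw [hg _ (hz j) _ (hx i')]
        ring
    _ ≤ ∑ j, r j * ∑ j', r j' * g (z j') (z j) := by
        gcongr with j _
        · exact hr j
        · exact hle _ (hz j)
    _ = ∑ j, ∑ j', r j * r j' * g (z j) (z j') := by
        rw [Finset.sum_comm]; simp only [Finset.mul_sum]
        exact Finset.sum_congr rfl fun _ _ => Finset.sum_congr rfl fun _ _ => by ring

section Channel

variable {𝒴 𝒵 : Type*}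

lemma qCh_nonneg {W : Bool → 𝒴 → ℝ} (hW : ∀ x y, 0 ≤ W x y) (y : 𝒴) : 0 ≤ qCh W y :=
  div_nonneg (add_nonneg (hW false y) (hW true y)) zero_le_two

lemma abs_sub_le_add_of_nonneg {W : Bool → 𝒴 → ℝ} (hW : ∀ x y, 0 ≤ W x y) (y : 𝒴) :
    |W false y - W true y| ≤ W false y + W true y :=
  abs_sub_le_of_nonneg_of_le (hW false y) (le_add_of_nonneg_right (hW true y)) (hW true y)
    (le_add_of_nonneg_left (hW false y))

lemma delta_mem_Icc {W : Bool → 𝒴 → ℝ} (hW : ∀ x y, 0 ≤ W x y) (y : 𝒴) :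
    delta W y ∈ Icc (-1 : ℝ) 1 :=
  div_mem_Icc_of_abs_le (abs_sub_le_add_of_nonneg hW y)

lemma qCh_mul_delta {W : Bool → 𝒴 → ℝ} (hW : ∀ x y, 0 ≤ W x y) (y : 𝒴) :
    qCh W y * delta W y = (W false y - W true y) / 2 := by
  rw [qCh, delta, div_mul_eq_mul_div, mul_div_cancel_of_abs_le (abs_sub_le_add_of_nonneg hW y)]

lemma qCh_mul_apply_delta (W : Bool → 𝒴 → ℝ) (f : ℝ → ℝ) (y : 𝒴) :
    qCh W y * f (delta W y) = persp f (W false y - W true y, W false y + W true y) / 2 := by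
  rw [qCh, delta, persp]
  ring

lemma qCh_polarMinus [Fintype 𝒴] (W : Bool → 𝒴 → ℝ) (y₁ y₂ : 𝒴) :
    qCh (polarMinus W) (y₁, y₂) = qCh W y₁ * qCh W y₂ := by
  simp only [qCh, polarMinus, Fintype.sum_bool, Bool.xor_false, Bool.xor_true, Bool.not_false,
    Bool.not_true]
  ring

lemma delta_polarMinus [Fintype 𝒴] (W : Bool → 𝒴 → ℝ) (y₁ y₂ : 𝒴) :
    delta (polarMinus W) (y₁, y₂) = delta W y₁ * delta W y₂ := by
  simp only [delta, polarMinus, Fintype.sum_bool, Bool.xor_false, Bool.xor_true, Bool.not_false,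
    Bool.not_true, div_mul_div_comm]
  rw [← mul_div_mul_left _ _ (two_ne_zero' ℝ)]
  ring_nf

lemma sum_qCh_polarPlus_mul {W : Bool → 𝒴 → ℝ} (hW : ∀ x y, 0 ≤ W x y) (f : ℝ → ℝ) (y₁ y₂ : 𝒴) :
    ∑ u, qCh (polarPlus W) (y₁, y₂, u) * f (delta (polarPlus W) (y₁, y₂, u)) =
      qCh W y₁ * qCh W y₂ * plusKernel f (delta W y₁) (delta W y₂) := by
  have hq := mul_nonneg (qCh_nonneg hW y₁) (qCh_nonneg hW y₂)
  have h₁ := qCh_mul_delta hW y₁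
  have h₂ := qCh_mul_delta hW y₂
  simp only [qCh_mul_apply_delta, Fintype.sum_bool, plusKernel, mul_div, mul_add, add_div,
    ← persp_smul f hq]
  simp only [polarPlus, Bool.xor_false, Bool.xor_true, Bool.not_false, Bool.not_true, Prod.smul_mk,
    smul_eq_mul]
  rw [add_comm]
  simp only [qCh] at h₁ h₂ ⊢
  congr 4
  · linear_combination -((W false y₁ + W true y₁) / 2) * h₂ - ((W false y₂ + W true y₂) / 2) * h₁
  · linear_combination -((W false y₂ + W true y₂) / 2 * delta W y₂) * h₁
      - ((W false y₁ - W true y₁) / 2) * h₂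
  · linear_combination -((W false y₁ + W true y₁) / 2) * h₂ + ((W false y₂ + W true y₂) / 2) * h₁
  · linear_combination ((W false y₂ + W true y₂) / 2 * delta W y₂) * h₁
      + ((W false y₁ - W true y₁) / 2) * h₂

variable [Fintype 𝒴] [Fintype 𝒵]

def SymmConvexLE (V : Bool → 𝒵 → ℝ) (W : Bool → 𝒴 → ℝ) : Prop :=
  ∀ f : ℝ → ℝ, ConvexOn ℝ (Icc (-1 : ℝ) 1) f → (∀ x ∈ Icc (-1 : ℝ) 1, f x = f (-x)) →
    ∑ z, qCh V z * f (delta V z) ≤ ∑ y, qCh W y * f (delta W y)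

namespace SymmConvexLE

variable {V : Bool → 𝒵 → ℝ} {W : Bool → 𝒴 → ℝ}

lemma sum_sum_le (h : SymmConvexLE V W) (hV : ∀ x z, 0 ≤ V x z) (hW : ∀ x y, 0 ≤ W x y)
    {g : ℝ → ℝ → ℝ} (hconv : ∀ t ∈ Icc (-1 : ℝ) 1, ConvexOn ℝ (Icc (-1 : ℝ) 1) (g · t))
    (hneg : ∀ t ∈ Icc (-1 : ℝ) 1, ∀ s ∈ Icc (-1 : ℝ) 1, g s t = g (-s) t)
    (hcomm : ∀ s ∈ Icc (-1 : ℝ) 1, ∀ t ∈ Icc (-1 : ℝ) 1, g s t = g t s) :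
    ∑ z₁, ∑ z₂, qCh V z₁ * qCh V z₂ * g (delta V z₁) (delta V z₂) ≤
      ∑ y₁, ∑ y₂, qCh W y₁ * qCh W y₂ * g (delta W y₁) (delta W y₂) :=
  sum_sum_mul_le_sum_sum_mul (qCh_nonneg hV) (qCh_nonneg hW) (delta_mem_Icc hV)
    (delta_mem_Icc hW) hcomm fun t ht => h _ (hconv t ht) (hneg t ht)

lemma polarMinus (h : SymmConvexLE V W) (hV : ∀ x z, 0 ≤ V x z) (hW : ∀ x y, 0 ≤ W x y) :
    SymmConvexLE (polarMinus V) (polarMinus W) := by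
  intro f hf hf_even
  simp only [Fintype.sum_prod_type, qCh_polarMinus, delta_polarMinus]
  refine h.sum_sum_le hV hW (g := fun s t => f (s * t)) (fun t ht => ?_) (fun t ht s hs => ?_)
    fun s _ t _ => by rw [mul_comm]
  · exact (hf.comp_add_smul (convex_Icc _ _) 0 t fun s hs => by
      simpa using mul_mem_Icc_neg_one_one hs ht).congr fun s _ => by simp
  · rw [hf_even _ (mul_mem_Icc_neg_one_one hs ht), neg_mul]

lemma polarPlus (h : SymmConvexLE V W) (hV : ∀ x z, 0 ≤ V x z) (hW : ∀ x y, 0 ≤ W x y) :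
    SymmConvexLE (polarPlus V) (polarPlus W) := by
  intro f hf hf_even
  simp only [Fintype.sum_prod_type, sum_qCh_polarPlus_mul hV, sum_qCh_polarPlus_mul hW]
  exact h.sum_sum_le hV hW (fun t ht => convexOn_plusKernel hf ht)
    (fun t _ s _ => (plusKernel_neg_left f s t).symm) fun s hs t ht => plusKernel_comm hf_even hs ht

end SymmConvexLE

end Channel

theorem polar_preserves_symmetric_convex_order_general
    {𝒴 𝒵 : Type*} [Fintype 𝒴] [Fintype 𝒵]
    (W : Bool → 𝒴 → ℝ) (V : Bool → 𝒵 → ℝ)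
    (hWnonneg : ∀ x y, 0 ≤ W x y) (hVnonneg : ∀ x z, 0 ≤ V x z)
    (hord : ∀ f : ℝ → ℝ, ConvexOn ℝ (Icc (-1 : ℝ) 1) f →
      (∀ x ∈ Icc (-1 : ℝ) 1, f x = f (-x)) →
      ∑ z, qCh V z * f (delta V z) ≤ ∑ y, qCh W y * f (delta W y)) :
    (∀ f : ℝ → ℝ, ConvexOn ℝ (Icc (-1 : ℝ) 1) f →
      (∀ x ∈ Icc (-1 : ℝ) 1, f x = f (-x)) →
      ∑ z, qCh (polarMinus V) z * f (delta (polarMinus V) z)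
        ≤ ∑ y, qCh (polarMinus W) y * f (delta (polarMinus W) y)) ∧
    (∀ f : ℝ → ℝ, ConvexOn ℝ (Icc (-1 : ℝ) 1) f →
      (∀ x ∈ Icc (-1 : ℝ) 1, f x = f (-x)) →
      ∑ z, qCh (polarPlus V) z * f (delta (polarPlus V) z)
        ≤ ∑ y, qCh (polarPlus W) y * f (delta (polarPlus W) y)) :=
  have h : SymmConvexLE V W := hord
  ⟨h.polarMinus hVnonneg hWnonneg, h.polarPlus hVnonneg hWnonneg⟩

theorem polar_preserves_symmetric_convex_order
    {𝒴 𝒵 : Type*} [Fintype 𝒴] [Fintype 𝒵]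
    (W : Bool → 𝒴 → ℝ) (V : Bool → 𝒵 → ℝ)
    (hWnonneg : ∀ x y, 0 ≤ W x y) (hVnonneg : ∀ x z, 0 ≤ V x z)
    (hWsum : ∀ x, ∑ y, W x y = 1) (hVsum : ∀ x, ∑ z, V x z = 1)
    (hord : ∀ f : ℝ → ℝ, ConvexOn ℝ (Icc (-1 : ℝ) 1) f →
      (∀ x ∈ Icc (-1 : ℝ) 1, f x = f (-x)) →
      ∑ z, qCh V z * f (delta V z) ≤ ∑ y, qCh W y * f (delta W y)) :
    (∀ f : ℝ → ℝ, ConvexOn ℝ (Icc (-1 : ℝ) 1) f →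
      (∀ x ∈ Icc (-1 : ℝ) 1, f x = f (-x)) →
      ∑ z, qCh (polarMinus V) z * f (delta (polarMinus V) z)
        ≤ ∑ y, qCh (polarMinus W) y * f (delta (polarMinus W) y)) ∧
    (∀ f : ℝ → ℝ, ConvexOn ℝ (Icc (-1 : ℝ) 1) f →
      (∀ x ∈ Icc (-1 : ℝ) 1, f x = f (-x)) →
      ∑ z, qCh (polarPlus V) z * f (delta (polarPlus V) z)
        ≤ ∑ y, qCh (polarPlus W) y * f (delta (polarPlus W) y)) :=
  polar_preserves_symmetric_convex_order_general W V hWnonneg hVnonneg hord
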